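/- arXiv:1101.0383 — 4 statements merged into one kernel-verified Lean document; each statement's English description precedes it below -/
import Mathlib

section
/- Let (E, F) be a dual pair of real vector spaces. The Mackey topology τ(E, F) is the finest locally convex topology on E whose continuous dual is exactly F (Mackey–Arens): if μ is a locally convex topology on E with (E, μ)' = F, then μ is coarser than τ(E, F). -/
/-!
A `μ`-neighbourhood of `x` contains `x + V` with `V` a closed absolutely convex neighbourhood
of `0`. The polar `V° ⊆ F` is absolutely convex and `σ(F, E)`-compact: its image in `ℝ^E` is the
set of all linear functionals bounded by `1` on `V` (these are `μ`-continuous, so they do come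
from `F`), which is closed and pointwise bounded because `V` is absorbent, hence compact by
Tychonoff. So `x + V°°` is a Mackey neighbourhood of `x`, and `V°° = V` by the bipolar theorem:
a point outside `V` is separated from it by a `μ`-continuous functional, i.e. by an element of `F`.
-/

/-- The weak topology `σ(F, E)` on `F` induced by a bilinear pairing `B : E × F → ℝ`. -/
def sigmaTopology {E F : Type*} [AddCommGroup E] [Module ℝ E] [AddCommGroup F] [Module ℝ F]
    (B : E →ₗ[ℝ] F →ₗ[ℝ] ℝ) : TopologicalSpace F :=
  TopologicalSpace.induced (fun f (x : E) => B x f) inferInstance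

/-- The Mackey topology `τ(E, F)` of a dual pair: the topology on `E` of uniform convergence
on absolutely convex `σ(F, E)`-compact subsets of `F`. -/
noncomputable def mackeyTopologyOfPairing {E F : Type*} [AddCommGroup E] [Module ℝ E]
    [AddCommGroup F] [Module ℝ F] (B : E →ₗ[ℝ] F →ₗ[ℝ] ℝ) : TopologicalSpace E :=
  TopologicalSpace.induced
    (fun x => UniformOnFun.ofFun
      {S : Set F | Balanced ℝ S ∧ Convex ℝ S ∧ @IsCompact F (sigmaTopology B) S}
      (fun f : F => B x f))
    inferInstance

open Topology Filter Set

namespace LinearMap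

theorem balanced_polar {𝕜 E F : Type*} [NormedCommRing 𝕜] [AddCommMonoid E] [AddCommMonoid F]
    [Module 𝕜 E] [Module 𝕜 F] (B : E →ₗ[𝕜] F →ₗ[𝕜] 𝕜) (s : Set E) :
    Balanced 𝕜 (B.polar s) := by
  rintro a ha _ ⟨y, hy, rfl⟩ x hx
  calc ‖B x (a • y)‖ = ‖a * B x y‖ := by rw [map_smul, smul_eq_mul]
    _ ≤ ‖a‖ * ‖B x y‖ := norm_mul_le _ _
    _ ≤ 1 * 1 := mul_le_mul ha (hy x hx) (norm_nonneg _) zero_le_one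
    _ = 1 := one_mul 1

theorem convex_polar {E F : Type*} [AddCommMonoid E] [Module ℝ E] [AddCommMonoid F]
    [Module ℝ F] (B : E →ₗ[ℝ] F →ₗ[ℝ] ℝ) (s : Set E) : Convex ℝ (B.polar s) := by
  intro y hy z hz a b ha hb hab x hx
  calc ‖B x (a • y + b • z)‖ = ‖a * B x y + b * B x z‖ := by simp only [map_add, map_smul,
        smul_eq_mul]
    _ ≤ a * ‖B x y‖ + b * ‖B x z‖ := by
        grw [norm_add_le, norm_mul, norm_mul, Real.norm_of_nonneg ha, Real.norm_of_nonneg hb]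
    _ ≤ a * 1 + b * 1 := by gcongr <;> [exact hy x hx; exact hz x hx]
    _ = 1 := by rw [mul_one, mul_one, hab]

end LinearMap

theorem isCompact_image_coe_setOf_norm_le_one {E : Type*} [AddCommGroup E] [Module ℝ E]
    {V : Set E} (hV : Absorbent ℝ V) :
    IsCompact (((↑) : (E →ₗ[ℝ] ℝ) → E → ℝ) '' {φ | ∀ x ∈ V, ‖φ x‖ ≤ 1}) := by
  have himage : ((↑) : (E →ₗ[ℝ] ℝ) → E → ℝ) '' {φ | ∀ x ∈ V, ‖φ x‖ ≤ 1} =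
      range ((↑) : (E →ₗ[ℝ] ℝ) → E → ℝ) ∩ ⋂ x ∈ V, {g | ‖g x‖ ≤ 1} := by
    ext g
    simp only [mem_image, mem_inter_iff, mem_range, mem_iInter]
    aesop
  have hclosed : IsClosed (range ((↑) : (E →ₗ[ℝ] ℝ) → E → ℝ) ∩ ⋂ x ∈ V, {g | ‖g x‖ ≤ 1}) :=
    (LinearMap.isClosed_range_coe E ℝ (RingHom.id ℝ)).inter <| isClosed_biInter fun x _ =>
      isClosed_le (continuous_apply x).norm continuous_const
  have hbounded : ∀ x, ∃ r : ℝ, ∀ φ : E →ₗ[ℝ] ℝ, (∀ x ∈ V, ‖φ x‖ ≤ 1) → ‖φ x‖ ≤ r := by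
    intro x
    obtain ⟨r, hr, v, hv, rfl⟩ := hV.gauge_set_nonempty (x := x)
    refine ⟨r, fun φ hφ => ?_⟩
    calc ‖φ (r • v)‖ = r * ‖φ v‖ := by rw [map_smul, norm_smul, Real.norm_of_nonneg hr.le]
      _ ≤ r * 1 := by grw [hφ v hv]
      _ = r := mul_one r
  choose r hr using hbounded
  rw [himage]
  refine (isCompact_univ_pi fun x => ProperSpace.isCompact_closedBall (0 : ℝ) (r x))
    |>.of_isClosed_subset hclosed ?_
  rintro _ ⟨⟨φ, rfl⟩, hφ⟩ x -
  simpa using hr x φ (by simpa using hφ)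

section Topological

variable {E F : Type*} [AddCommGroup E] [Module ℝ E] [AddCommGroup F] [Module ℝ F]
  (B : E →ₗ[ℝ] F →ₗ[ℝ] ℝ) [TopologicalSpace E] [IsTopologicalAddGroup E] [ContinuousSMul ℝ E]

theorem LinearMap.isCompact_polar_of_mem_nhds (hdual : ∀ φ : E →L[ℝ] ℝ, ∃ f : F, ∀ x, φ x = B x f)
    {V : Set E} (hV : V ∈ 𝓝 0) : @IsCompact F (sigmaTopology B) (B.polar V) := by
  let := sigmaTopology B
  have hinducing : IsInducing (fun (f : F) (x : E) => B x f) := ⟨rfl⟩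
  rw [hinducing.isCompact_iff]
  convert isCompact_image_coe_setOf_norm_le_one (absorbent_nhds_zero hV) using 1
  ext g
  constructor
  · rintro ⟨f, hf, rfl⟩
    exact ⟨B.flip f, hf, rfl⟩
  · rintro ⟨φ, hφ, rfl⟩
    have hbounded : ∃ V ∈ 𝓝 (0 : E), Bornology.IsVonNBounded ℝ (φ '' V) :=
      ⟨V, hV, (NormedSpace.isVonNBounded_closedBall ℝ ℝ 1).subset <| by
        rintro _ ⟨x, hx, rfl⟩
        simpa using hφ x hx⟩
    obtain ⟨f, hf⟩ := hdual (φ.clmOfExistsBoundedImage hbounded)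
    refine ⟨f, fun x hx => ?_, funext fun x => (hf x).symm⟩
    simpa [← hf] using hφ x hx

theorem LinearMap.bipolar_eq_of_absConvex_of_isClosed [LocallyConvexSpace ℝ E]
    (hdual : ∀ φ : E →L[ℝ] ℝ, ∃ f : F, ∀ x, φ x = B x f)
    {V : Set E} (hVabs : AbsConvex ℝ V) (hVcl : IsClosed V) (hV0 : (0 : E) ∈ V) :
    B.flip.polar (B.polar V) = V := by
  refine Subset.antisymm (fun y hy => ?_) (B.subset_bipolar V)
  by_contra hyV
  obtain ⟨φ, u, hφV, hφy⟩ := geometric_hahn_banach_closed_point hVabs.2 hVcl hyV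
  have hu : 0 < u := by simpa using hφV 0 hV0
  obtain ⟨f, hf⟩ := hdual (u⁻¹ • φ)
  have hfV : f ∈ B.polar V := by
    intro x hx
    have hneg : φ (-x) < u := hφV _ (hVabs.1.neg_mem_iff.2 hx)
    rw [← hf, _root_.smul_apply, smul_eq_mul, norm_mul, Real.norm_eq_abs,
      Real.norm_eq_abs, abs_inv, abs_of_pos hu, inv_mul_le_one₀ hu, abs_le]
    constructor <;> linarith [hφV x hx, map_neg φ x]
  have hfy : ‖u⁻¹ * φ y‖ ≤ 1 := by simpa [← hf] using hy f hfV
  rw [Real.norm_eq_abs, abs_le, inv_mul_le_one₀ hu] at hfy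
  linarith [hfy.2]

end Topological

theorem mem_nhds_mackeyTopologyOfPairing {E F : Type*} [AddCommGroup E] [Module ℝ E]
    [AddCommGroup F] [Module ℝ F] (B : E →ₗ[ℝ] F →ₗ[ℝ] ℝ) {K : Set F} (hKbal : Balanced ℝ K)
    (hKconv : Convex ℝ K) (hKcomp : @IsCompact F (sigmaTopology B) K) (x : E) :
    {y | y - x ∈ B.flip.polar K} ∈ @nhds E (mackeyTopologyOfPairing B) x := by
  rw [mackeyTopologyOfPairing, nhds_induced, mem_comap]
  refine ⟨_, UniformOnFun.gen_mem_nhds ℝ _ _ (s := K) ?_ (Metric.dist_mem_uniformity one_pos),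
    fun y hy f hf => ?_⟩
  · exact ⟨hKbal, hKconv, hKcomp⟩
  have hdist := hy f hf
  simp only [UniformOnFun.toFun_ofFun, mem_ofPred_eq, Real.dist_eq] at hdist
  rw [LinearMap.flip_apply, map_sub, LinearMap.sub_apply, Real.norm_eq_abs, abs_sub_comm]
  exact hdist.le

theorem mackey_arens_general
    {E F : Type*} [AddCommGroup E] [Module ℝ E] [AddCommGroup F] [Module ℝ F]
    (B : E →ₗ[ℝ] F →ₗ[ℝ] ℝ)
    (μ : TopologicalSpace E)
    (hgrp : @IsTopologicalAddGroup E μ _)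
    (hsmul : @ContinuousSMul ℝ E _ _ μ)
    (hlc : @LocallyConvexSpace ℝ E _ _ _ _ μ)
    (hdual : ∀ φ : E →ₗ[ℝ] ℝ, @Continuous E ℝ μ _ φ ↔ ∃ f : F, ∀ x, φ x = B x f) :
    mackeyTopologyOfPairing B ≤ μ := by
  let := μ
  have hdual' : ∀ φ : E →L[ℝ] ℝ, ∃ f : F, ∀ x, φ x = B x f :=
    fun φ => (hdual φ).1 φ.continuous
  refine (le_iff_nhds _ _).2 fun x U hU => ?_
  rw [← map_add_left_nhds_zero, mem_map] at hU
  obtain ⟨V, ⟨hV0, hVcl, hVabs⟩, hVU⟩ := (nhds_hasBasis_absConvex_closed ℝ E).mem_iff.1 hU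
  filter_upwards [mem_nhds_mackeyTopologyOfPairing B (B.balanced_polar V) (B.convex_polar V)
    (B.isCompact_polar_of_mem_nhds hdual' hV0) x] with y hy
  rw [B.bipolar_eq_of_absConvex_of_isClosed hdual' hVabs hVcl (mem_of_mem_nhds hV0)] at hy
  simpa using hVU hy

/-- Mackey–Arens: for a dual pair `(E, F)`, any locally convex topology `μ` on
`E` whose continuous dual is exactly `F` is coarser than the Mackey topology `τ(E, F)`. -/
theorem mackey_arens
    {E F : Type*} [AddCommGroup E] [Module ℝ E] [AddCommGroup F] [Module ℝ F]
    (B : E →ₗ[ℝ] F →ₗ[ℝ] ℝ)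
    (hsepE : ∀ x : E, x ≠ 0 → ∃ f : F, B x f ≠ 0)
    (hsepF : ∀ f : F, f ≠ 0 → ∃ x : E, B x f ≠ 0)
    (μ : TopologicalSpace E)
    (hgrp : @IsTopologicalAddGroup E μ _)
    (hsmul : @ContinuousSMul ℝ E _ _ μ)
    (hlc : @LocallyConvexSpace ℝ E _ _ _ _ μ)
    (hdual : ∀ φ : E →ₗ[ℝ] ℝ, @Continuous E ℝ μ _ φ ↔ ∃ f : F, ∀ x, φ x = B x f) :
    mackeyTopologyOfPairing B ≤ μ :=
  mackey_arens_general B μ hgrp hsmul hlc hdual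
end

section
/- A locally convex space E that is metrizable and is the locally convex inductive limit of an increasing sequence of normed spaces (i.e., a metrizable (DF)-space) is normable. -/
/-!
Take a decreasing basis `U r` of absolutely convex neighbourhoods of `0` and radii `ε r` with
`u r '' ball 0 (ε r) ⊆ U r`, and let `W` be the absolutely convex hull of
`S = ⋃ r, u r '' ball 0 (ε r)`. Each `u r ⁻¹' W` is a neighbourhood of `0`, so the gauge of `W`
is a seminorm making every `u r` continuous; as `E` carries the finest such locally convex
topology, `W` is a neighbourhood of `0`. On the other hand `S` is bounded: given `n`, all pieces
of the union with `r ≥ n` lie in `U n`, and the finitely many others are bounded. A bounded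
absolutely convex neighbourhood of `0` has a gauge that is a norm defining the topology.
-/

open Filter Bornology TopologicalSpace
open scoped Topology

section Bounded

variable {E : Type*} [AddCommGroup E] [TopologicalSpace E]

theorem Bornology.IsVonNBounded.absConvexHull [Module ℝ E] [LocallyConvexSpace ℝ E]
    [ContinuousSMul ℝ E] {s : Set E} (hs : IsVonNBounded ℝ s) :
    IsVonNBounded ℝ (absConvexHull ℝ s) := by
  rw [(nhds_hasBasis_absConvex ℝ E).isVonNBounded_iff]
  rintro V ⟨hV, hVbal, hVconv⟩
  exact Eventually.mono (hs hV) fun (a : ℝ) ha ↦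
    absConvexHull_min ha ⟨hVbal.smul a, hVconv.smul a⟩

theorem Filter.HasAntitoneBasis.isVonNBounded_iUnion {𝕜 : Type*} [NormedDivisionRing 𝕜]
    [Module 𝕜 E] {U : ℕ → Set E} (hU : (𝓝 0).HasAntitoneBasis U)
    (hUbal : ∀ n, Balanced 𝕜 (U n)) {S : ℕ → Set E} (hS : ∀ n, IsVonNBounded 𝕜 (S n))
    (hSU : ∀ n, S n ⊆ U n) : IsVonNBounded 𝕜 (⋃ n, S n) := by
  rw [hU.toHasBasis.isVonNBounded_iff]
  intro n _
  have hsplit : ⋃ r, S r ⊆ (⋃ r ∈ Set.Iio n, S r) ∪ U n := by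
    refine Set.iUnion_subset fun r ↦ ?_
    rcases lt_or_ge r n with hrn | hnr
    · exact (Set.subset_biUnion_of_mem (u := S) (Set.mem_Iio.2 hrn)).trans
        Set.subset_union_left
    · exact (hSU r).trans ((hU.antitone hnr).trans Set.subset_union_right)
  refine Absorbs.mono_right (Absorbs.union ?_ (hUbal n).absorbs_self) hsplit
  exact (isVonNBounded_biUnion (Set.finite_Iio n)).2 (fun r _ ↦ hS r) (hU.mem n)

end Bounded

theorem withSeminorms_gaugeSeminorm_of_isVonNBounded {E : Type*} [AddCommGroup E] [Module ℝ E]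
    [TopologicalSpace E] [IsTopologicalAddGroup E] [ContinuousSMul ℝ E] {W : Set E}
    (hWbal : Balanced ℝ W) (hWconv : Convex ℝ W) (hW : W ∈ 𝓝 0) (hWb : IsVonNBounded ℝ W) :
    WithSeminorms (fun _ : Fin 1 ↦ gaugeSeminorm hWbal hWconv (absorbent_nhds_zero hW)) := by
  rw [SeminormFamily.withSeminorms_iff_nhds_eq_iInf, iInf_const]
  exact (comap_gauge_nhds_zero hWb hW).symm

section InductiveLimit

variable {E : Type*} [AddCommGroup E] [Module ℝ E] {ι : Type*} {X : ι → Type*}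
  [∀ r, AddCommGroup (X r)] [∀ r, Module ℝ (X r)] [∀ r, TopologicalSpace (X r)]
  [∀ r, IsTopologicalAddGroup (X r)] [tE : TopologicalSpace E]

def IsLocallyConvexInductiveLimit (u : ∀ r, X r →ₗ[ℝ] E) : Prop :=
  ∀ t : TopologicalSpace E,
    (@IsTopologicalAddGroup E t _ ∧ @ContinuousSMul ℝ E _ _ t ∧
      @LocallyConvexSpace ℝ E _ _ _ _ t) →
    (∀ r, @Continuous (X r) E _ t (u r)) → tE ≤ t

variable {u : ∀ r, X r →ₗ[ℝ] E}

theorem IsLocallyConvexInductiveLimit.continuous_seminorm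
    (hu : IsLocallyConvexInductiveLimit u) (p : Seminorm ℝ E)
    (hp : ∀ r, Continuous (p.comp (u r))) : Continuous p := by
  let t : TopologicalSpace E := (SeminormFamily.moduleFilterBasis (fun _ : Fin 1 ↦ p)).topology
  have hpt : WithSeminorms (topology := t) (fun _ : Fin 1 ↦ p) := ⟨rfl⟩
  have hle : tE ≤ t := hu t
    ⟨hpt.topologicalAddGroup, hpt.continuousSMul, hpt.toLocallyConvexSpace⟩
    fun r ↦ hpt.continuous_of_continuous_comp (u r) fun _ ↦ hp r
  exact continuous_le_dom hle (hpt.continuous_seminorm 0)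

theorem IsLocallyConvexInductiveLimit.mem_nhds_zero [∀ r, ContinuousSMul ℝ (X r)]
    (hu : IsLocallyConvexInductiveLimit u) (hunion : ∀ e : E, ∃ r, ∃ x : X r, u r x = e)
    {W : Set E} (hWbal : Balanced ℝ W) (hWconv : Convex ℝ W) (hW : ∀ r, u r ⁻¹' W ∈ 𝓝 0) :
    W ∈ 𝓝 0 := by
  have hWabs : Absorbent ℝ W := by
    intro e
    obtain ⟨r, x, rfl⟩ := hunion e
    filter_upwards [absorbent_nhds_zero (hW r) x] with a ha
    obtain ⟨y, hy, hyx⟩ := Set.singleton_subset_iff.1 ha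
    exact Set.singleton_subset_iff.2
      ⟨u r y, hy, (map_smul (u r) a y).symm.trans (congrArg (u r) hyx)⟩
  let N := gaugeSeminorm hWbal hWconv hWabs
  have hN : Continuous N := hu.continuous_seminorm N fun r ↦ Seminorm.continuous' (r := 1) <|
    mem_of_superset (hW r) fun x hx ↦ by
      rw [Seminorm.mem_closedBall_zero]
      exact gauge_le_one_of_mem hx
  refine mem_of_superset ((isOpen_lt hN (continuous_const (y := (1 : ℝ)))).mem_nhds ?_) ?_
  · simp
  exact setOfPred_gauge_lt_one_subset_self hWconv hWabs.zero_mem hWabs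

end InductiveLimit

theorem metrizable_DF_is_normable_general
    {E : Type*} [AddCommGroup E] [Module ℝ E] [tE : TopologicalSpace E]
    [IsTopologicalAddGroup E] [ContinuousSMul ℝ E] [LocallyConvexSpace ℝ E]
    [MetrizableSpace E]
    (X : ℕ → Type*) [∀ r, NormedAddCommGroup (X r)] [∀ r, NormedSpace ℝ (X r)]
    (u : ∀ r, X r →ₗ[ℝ] E)
    (hunion : ∀ e : E, ∃ r, ∃ x : X r, u r x = e)
    (hcont : ∀ r, Continuous (u r))
    (hfinest : ∀ t : TopologicalSpace E,
      (@IsTopologicalAddGroup E t _ ∧ @ContinuousSMul ℝ E _ _ t ∧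
        @LocallyConvexSpace ℝ E _ _ _ _ t) →
      (∀ r, @Continuous (X r) E _ t (u r)) → tE ≤ t) :
    ∃ N : Seminorm ℝ E, (∀ x : E, N x = 0 → x = 0) ∧
      WithSeminorms (fun _ : Fin 1 => N) := by
  obtain ⟨U, hU, hUb⟩ := (nhds_hasBasis_absConvex ℝ E).exists_antitone_subbasis
  have hball : ∀ r, ∃ ε > 0, u r '' Metric.ball 0 ε ⊆ U r := fun r ↦ by
    obtain ⟨ε, hε, hsub⟩ :=
      Metric.mem_nhds_iff.1 ((hcont r).tendsto' 0 0 (map_zero _) (hU r).1)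
    exact ⟨ε, hε, Set.image_subset_iff.2 hsub⟩
  choose ε hε hεU using hball
  set S := ⋃ r, u r '' Metric.ball 0 (ε r)
  have hS : IsVonNBounded ℝ S := hUb.isVonNBounded_iUnion (fun n ↦ (hU n).2.1)
    (fun r ↦ (NormedSpace.isVonNBounded_ball ℝ (X r) (ε r)).image ⟨u r, hcont r⟩) hεU
  have hW : absConvexHull ℝ S ∈ 𝓝 0 :=
    IsLocallyConvexInductiveLimit.mem_nhds_zero hfinest hunion balanced_absConvexHull
      convex_absConvexHull fun r ↦ mem_of_superset (Metric.ball_mem_nhds 0 (hε r))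
        fun x hx ↦ subset_absConvexHull (Set.mem_iUnion_of_mem r (Set.mem_image_of_mem _ hx))
  exact ⟨_, fun x ↦ (gauge_eq_zero (absorbent_nhds_zero hW) hS.absConvexHull).1,
    withSeminorms_gaugeSeminorm_of_isVonNBounded balanced_absConvexHull convex_absConvexHull hW
      hS.absConvexHull⟩

/-- a metrizable locally convex space which is the locally convex inductive limit
of an increasing sequence of normed spaces (a metrizable (DF)-space) is normable: its topology
is induced by a single norm. -/
theorem metrizable_DF_is_normable
    {E : Type*} [AddCommGroup E] [Module ℝ E] [tE : TopologicalSpace E]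
    [IsTopologicalAddGroup E] [ContinuousSMul ℝ E] [LocallyConvexSpace ℝ E]
    [MetrizableSpace E]
    (X : ℕ → Type*) [∀ r, NormedAddCommGroup (X r)] [∀ r, NormedSpace ℝ (X r)]
    (u : ∀ r, X r →ₗ[ℝ] E) (i : ∀ r, X r →ₗ[ℝ] X (r + 1))
    (hcomm : ∀ r (x : X r), u (r + 1) (i r x) = u r x)
    (hinj : ∀ r, Function.Injective (u r))
    (hicont : ∀ r, Continuous (i r))
    (hunion : ∀ e : E, ∃ r, ∃ x : X r, u r x = e)
    (hcont : ∀ r, Continuous (u r))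
    (hfinest : ∀ t : TopologicalSpace E,
      (@IsTopologicalAddGroup E t _ ∧ @ContinuousSMul ℝ E _ _ t ∧
        @LocallyConvexSpace ℝ E _ _ _ _ t) →
      (∀ r, @Continuous (X r) E _ t (u r)) → tE ≤ t) :
    ∃ N : Seminorm ℝ E, (∀ x : E, N x = 0 → x = 0) ∧
      WithSeminorms (fun _ : Fin 1 => N) :=
  metrizable_DF_is_normable_general (tE := tE) X u hunion hcont hfinest
end

section
/- For a dual pair (E, F), a linear functional on E is continuous for the Mackey topology τ(E, F) if and only if it is represented by an element of F; i.e., (E, τ(E,F))' = F. -/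
open Set Topology Pointwise

theorem Balanced.linearMap_image {X Y : Type*} [AddCommGroup X] [Module ℝ X] [AddCommGroup Y]
    [Module ℝ Y] {S : Set X} (hS : Balanced ℝ S) (f : X →ₗ[ℝ] Y) : Balanced ℝ (f '' S) :=
  fun a ha => by
    rw [← image_smul_set]
    exact image_mono (hS a ha)

section AbsConvexCompacts

variable (X : Type*) [TopologicalSpace X] [AddCommGroup X] [Module ℝ X]

def absConvexCompacts : Set (Set X) :=
  {S | Balanced ℝ S ∧ Convex ℝ S ∧ IsCompact S}

variable {X} {Y : Type*} [TopologicalSpace Y] [AddCommGroup Y] [Module ℝ Y] {S T : Set X}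

theorem LinearMap.image_mem_absConvexCompacts (f : X →ₗ[ℝ] Y) (hf : Continuous f)
    (hS : S ∈ absConvexCompacts X) : f '' S ∈ absConvexCompacts Y :=
  ⟨hS.1.linearMap_image f, hS.2.1.linear_image f, hS.2.2.image hf⟩

theorem absConvexCompacts_nonempty : (absConvexCompacts X).Nonempty :=
  ⟨∅, balanced_empty, convex_empty, isCompact_empty⟩

theorem insert_zero_mem_absConvexCompacts (hS : S ∈ absConvexCompacts X) :
    insert 0 S ∈ absConvexCompacts X := by
  obtain ⟨hbal, hcvx, hcpt⟩ := hS
  refine ⟨?_, ?_, hcpt.insert 0⟩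
  · rw [insert_eq, singleton_zero]
    exact balanced_zero.union hbal
  · rcases S.eq_empty_or_nonempty with rfl | hne
    · simp
    · rwa [insert_eq_self.2 (hbal.zero_mem hne)]

theorem smul_mem_absConvexCompacts [ContinuousConstSMul ℝ X] (a : ℝ)
    (hS : S ∈ absConvexCompacts X) : a • S ∈ absConvexCompacts X :=
  ⟨hS.1.smul a, hS.2.1.smul a, hS.2.2.smul a⟩

theorem add_mem_absConvexCompacts [ContinuousAdd X] (hS : S ∈ absConvexCompacts X)
    (hT : T ∈ absConvexCompacts X) : S + T ∈ absConvexCompacts X :=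
  ⟨hS.1.add hT.1, hS.2.1.add hT.2.1, hS.2.2.add hT.2.2⟩

theorem directedOn_absConvexCompacts [ContinuousAdd X] :
    DirectedOn (· ⊆ ·) (absConvexCompacts X) := fun S hS T hT =>
  ⟨insert 0 S + insert 0 T,
    add_mem_absConvexCompacts (insert_zero_mem_absConvexCompacts hS)
      (insert_zero_mem_absConvexCompacts hT),
    fun s hs => ⟨s, mem_insert_of_mem 0 hs, 0, mem_insert 0 T, add_zero s⟩,
    fun t ht => ⟨0, mem_insert 0 S, t, mem_insert_of_mem 0 ht, zero_add t⟩⟩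

theorem segment_mem_absConvexCompacts [ContinuousSMul ℝ X] (x : X) :
    LinearMap.toSpanSingleton ℝ X x '' Metric.closedBall 0 1 ∈ absConvexCompacts X :=
  (LinearMap.toSpanSingleton ℝ X x).image_mem_absConvexCompacts
    (continuous_id.smul continuous_const)
    ⟨balanced_closedBall_zero, convex_closedBall 0 1, isCompact_closedBall 0 1⟩

end AbsConvexCompacts

theorem LinearMap.flip_polar_polar_subset {V W : Type*} [AddCommGroup V] [Module ℝ V]
    [AddCommGroup W] [Module ℝ W] (P : V →ₗ[ℝ] W →ₗ[ℝ] ℝ) {K : Set (WeakBilin P)}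
    (hne : K.Nonempty) (hbal : Balanced ℝ K) (hcvx : Convex ℝ K) (hcl : IsClosed K) :
    P.flip.polar (P.polar K) ⊆ K := by
  intro v hv
  by_contra hvK
  obtain ⟨g, u, hgK, hgv⟩ := geometric_hahn_banach_closed_point hcvx hcl hvK
  obtain ⟨w, rfl⟩ := LinearMap.dualEmbedding_surjective P g
  have hu : 0 < u := by simpa using hgK 0 (hbal.zero_mem hne)
  have hscale : ∀ y, ‖P y (u⁻¹ • w)‖ ≤ 1 ↔ |P y w| ≤ u := fun y => by
    rw [map_smul, smul_eq_mul, norm_mul, Real.norm_of_nonneg (inv_nonneg.2 hu.le),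
      inv_mul_le_iff₀ hu, mul_one, Real.norm_eq_abs]
  have hw : u⁻¹ • w ∈ P.polar K := fun k hk => (hscale k).2 <| by
    have hneg : P (-k) w < u := hgK (-k) (hbal.neg_mem_iff.2 hk)
    have hpos : P k w < u := hgK k hk
    rw [map_neg, LinearMap.neg_apply] at hneg
    exact (abs_lt.2 ⟨by linarith, hpos⟩).le
  have hvw : u < P v w := hgv
  linarith [(hscale v).1 (hv _ hw), le_abs_self (P v w)]

section PolarTopology

variable {E F : Type*} [AddCommGroup E] [Module ℝ E] [AddCommGroup F] [Module ℝ F]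
  (B : E →ₗ[ℝ] F →ₗ[ℝ] ℝ)

def polarTopology (𝔖 : Set (Set F)) : TopologicalSpace E :=
  TopologicalSpace.induced (fun x => UniformOnFun.ofFun 𝔖 fun f => B x f) inferInstance

theorem mackeyTopologyOfPairing_eq_polarTopology :
    mackeyTopologyOfPairing B = polarTopology B (absConvexCompacts (WeakBilin B.flip)) :=
  rfl

theorem continuous_polarTopology_apply {𝔖 : Set (Set F)} {S : Set F} (hS : S ∈ 𝔖) {f : F}
    (hf : f ∈ S) : Continuous[polarTopology B 𝔖, _] fun x => B x f :=
  letI := polarTopology B 𝔖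
  (UniformOnFun.uniformContinuous_eval_of_mem ℝ 𝔖 hf hS).continuous.comp continuous_induced_dom

theorem hasBasis_nhds_zero_polarTopology {𝔖 : Set (Set F)} (hne : 𝔖.Nonempty)
    (hdir : DirectedOn (· ⊆ ·) 𝔖) :
    (@nhds E (polarTopology B 𝔖) 0).HasBasis (fun Sε : Set F × ℝ => Sε.1 ∈ 𝔖 ∧ 0 < Sε.2)
      fun Sε => {x | ∀ f ∈ Sε.1, |B x f| ≤ Sε.2} := by
  have h := (UniformOnFun.hasBasis_nhds_zero_of_basis 𝔖 hne hdir
    (Metric.nhds_basis_closedBall (x := (0 : ℝ)))).comap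
      fun x => UniformOnFun.ofFun 𝔖 fun f => B x f
  have hL0 : (UniformOnFun.ofFun 𝔖 fun f => B 0 f) = 0 := by
    simp only [map_zero, LinearMap.zero_apply]
    rfl
  rw [show @nhds E (polarTopology B 𝔖) 0 = _ from nhds_induced _ 0, hL0]
  simpa [Real.norm_eq_abs] using h

end PolarTopology

section Mackey

variable {E F : Type*} [AddCommGroup E] [Module ℝ E] [AddCommGroup F] [Module ℝ F]
  {B : E →ₗ[ℝ] F →ₗ[ℝ] ℝ}

theorem exists_polar_bound_of_continuous_mackey {φ : E →ₗ[ℝ] ℝ}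
    (hφ : Continuous[mackeyTopologyOfPairing B, _] φ) :
    ∃ K ∈ absConvexCompacts (WeakBilin B.flip), K.Nonempty ∧ ∀ x ∈ B.flip.polar K, ‖φ x‖ ≤ 1 := by
  rw [mackeyTopologyOfPairing_eq_polarTopology] at hφ
  let := polarTopology B (absConvexCompacts (WeakBilin B.flip))
  have hbasis := hasBasis_nhds_zero_polarTopology B
    (absConvexCompacts_nonempty (X := WeakBilin B.flip))
    (directedOn_absConvexCompacts (X := WeakBilin B.flip))
  have hφ0 : φ ⁻¹' Metric.closedBall 0 1 ∈ 𝓝 0 :=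
    hφ.continuousAt.preimage_mem_nhds
      (by rw [map_zero]; exact Metric.closedBall_mem_nhds 0 one_pos)
  obtain ⟨⟨S, ε⟩, ⟨hS, hε⟩, hSε⟩ := hbasis.mem_iff.1 hφ0
  -- adjoining `0` makes `K` nonempty without changing its polar
  refine ⟨insert 0 (ε⁻¹ • S), insert_zero_mem_absConvexCompacts
    (smul_mem_absConvexCompacts ε⁻¹ hS), insert_nonempty _ _, fun x hx => ?_⟩
  have hxS : ∀ f ∈ S, |B x f| ≤ ε := fun f hf => by
    have := hx _ (mem_insert_of_mem 0 (smul_mem_smul_set hf))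
    rwa [LinearMap.flip_apply, map_smul, smul_eq_mul, norm_mul, norm_inv,
      Real.norm_of_nonneg hε.le, inv_mul_le_iff₀ hε, mul_one, Real.norm_eq_abs] at this
  simpa using hSε hxS

theorem mem_image_flip_of_polar_bound {K : Set (WeakBilin B.flip)}
    (hK : K ∈ absConvexCompacts (WeakBilin B.flip)) (hne : K.Nonempty) {φ : E →ₗ[ℝ] ℝ}
    (hφ : ∀ x ∈ B.flip.polar K, ‖φ x‖ ≤ 1) : φ ∈ B.flip '' K := by
  let P : (E →ₗ[ℝ] ℝ) →ₗ[ℝ] E →ₗ[ℝ] ℝ := LinearMap.id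
  have : T2Space (WeakBilin P) := (WeakBilin.isEmbedding (B := P) Function.injective_id).t2Space
  let j : WeakBilin B.flip →ₗ[ℝ] WeakBilin P := B.flip
  have hj : Continuous j :=
    WeakBilin.continuous_of_continuous_eval P (WeakBilin.eval_continuous B.flip)
  obtain ⟨hbal, hcvx, hcpt⟩ :=
    LinearMap.image_mem_absConvexCompacts (X := WeakBilin B.flip) (Y := WeakBilin P) j hj hK
  exact P.flip_polar_polar_subset (hne.image _) hbal hcvx hcpt.isClosed
    fun x hx => hφ x fun f hf => hx _ (mem_image_of_mem _ hf)

end Mackey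

theorem mackey_dual_general
    {E F : Type*} [AddCommGroup E] [Module ℝ E] [AddCommGroup F] [Module ℝ F]
    (B : E →ₗ[ℝ] F →ₗ[ℝ] ℝ) :
    ∀ φ : E →ₗ[ℝ] ℝ,
      @Continuous E ℝ (mackeyTopologyOfPairing B) _ φ ↔ ∃ f : F, ∀ x, φ x = B x f := by
  intro φ
  constructor
  · intro hφ
    obtain ⟨K, hK, hne, hbound⟩ := exists_polar_bound_of_continuous_mackey hφ
    obtain ⟨f, -, hf⟩ := mem_image_flip_of_polar_bound hK hne hbound
    exact ⟨f, fun x => (LinearMap.congr_fun hf x).symm⟩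
  · rintro ⟨f, hf⟩
    rw [show ⇑φ = fun x => B x f from funext hf, mackeyTopologyOfPairing_eq_polarTopology]
    exact continuous_polarTopology_apply B
      (segment_mem_absConvexCompacts (X := WeakBilin B.flip) f) ⟨1, by simp, one_smul ℝ f⟩

/-- for a dual pair `(E, F)`, a linear functional on `E` is continuous for the
Mackey topology `τ(E, F)` if and only if it is represented by an element of `F`;
i.e. `(E, τ(E,F))' = F`. -/
theorem mackey_dual
    {E F : Type*} [AddCommGroup E] [Module ℝ E] [AddCommGroup F] [Module ℝ F]
    (B : E →ₗ[ℝ] F →ₗ[ℝ] ℝ)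
    (hsepE : ∀ x : E, x ≠ 0 → ∃ f : F, B x f ≠ 0)
    (hsepF : ∀ f : F, f ≠ 0 → ∃ x : E, B x f ≠ 0) :
    ∀ φ : E →ₗ[ℝ] ℝ,
      @Continuous E ℝ (mackeyTopologyOfPairing B) _ φ ↔ ∃ f : F, ∀ x, φ x = B x f :=
  mackey_dual_general B
end

section
/- On the space P of pointed 0-chains on ℝ, the ♮-norm ‖A‖_♮ := inf_r ‖A‖_{B^r} (the limit of the decreasing sequence ‖A‖_{B^r}) is a norm, and the norm topology it induces on P is coarser than the locally convex inductive limit topology of the completions of (P, ‖·‖_{B^r}). -/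
/-- The set of values of the pairing `⟨A, ω⟩ = ∑_p A p * ω p` as `ω` ranges over smooth
functions with `C^r`-norm at most `1`. -/
def BnormSet (r : ℕ) (A : ℝ →₀ ℝ) : Set ℝ :=
  {x | ∃ ω : ℝ → ℝ, ContDiff ℝ (⊤ : ℕ∞) ω ∧ (∀ j ≤ r, ∀ t : ℝ, |iteratedDeriv j ω t| ≤ 1) ∧
    x = A.sum (fun p a => a * ω p)}

/-- The `B^r`-norm of a pointed 0-chain `A` on `ℝ`:
`‖A‖_{B^r} = sup { ∑_p A p * ω p : ω smooth, ‖ω‖_{C^r} ≤ 1 }`. -/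
noncomputable def Bnorm (r : ℕ) (A : ℝ →₀ ℝ) : ℝ :=
  sSup (BnormSet r A)

/-- The natural norm `‖A‖_♮ = inf_r ‖A‖_{B^r}`, the limit of the nonincreasing sequence of
`B^r`-norms. -/
noncomputable def natNorm (A : ℝ →₀ ℝ) : ℝ :=
  ⨅ r : ℕ, Bnorm r A

lemma iteratedDeriv_zero_fun (j : ℕ) : iteratedDeriv j (fun _ : ℝ => (0:ℝ)) = fun _ => 0 := by
  induction j with
  | zero => simp
  | succ n ih => rw [iteratedDeriv_succ, ih]; simp

lemma zero_mem_BnormSet (r : ℕ) (A : ℝ →₀ ℝ) : (0:ℝ) ∈ BnormSet r A := by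
  refine ⟨fun _ => 0, contDiff_const, ?_, ?_⟩
  · intro j _ t; rw [iteratedDeriv_zero_fun]; norm_num
  · simp

lemma BnormSet_nonempty (r : ℕ) (A : ℝ →₀ ℝ) : (BnormSet r A).Nonempty :=
  ⟨0, zero_mem_BnormSet r A⟩

lemma abs_le_of_mem_BnormSet {r : ℕ} {A : ℝ →₀ ℝ} {x : ℝ} (hx : x ∈ BnormSet r A) :
    |x| ≤ ∑ p ∈ A.support, |A p| := by
  obtain ⟨ω, hω, hb, rfl⟩ := hx
  rw [Finsupp.sum]
  calc |∑ p ∈ A.support, A p * ω p| ≤ ∑ p ∈ A.support, |A p * ω p| :=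
        Finset.abs_sum_le_sum_abs _ _
    _ ≤ ∑ p ∈ A.support, |A p| := by
        refine Finset.sum_le_sum fun p _ => ?_
        rw [abs_mul]
        have h := hb 0 (Nat.zero_le r) p
        rw [iteratedDeriv_zero] at h
        exact mul_le_of_le_one_right (abs_nonneg _) h

lemma BnormSet_bddAbove (r : ℕ) (A : ℝ →₀ ℝ) : BddAbove (BnormSet r A) :=
  ⟨∑ p ∈ A.support, |A p|, fun x hx => (le_abs_self x).trans (abs_le_of_mem_BnormSet hx)⟩

lemma Bnorm_nonneg (r : ℕ) (A : ℝ →₀ ℝ) : 0 ≤ Bnorm r A :=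
  le_csSup (BnormSet_bddAbove r A) (zero_mem_BnormSet r A)

lemma Bnorm_anti {r r' : ℕ} (h : r ≤ r') (A : ℝ →₀ ℝ) : Bnorm r' A ≤ Bnorm r A :=
  csSup_le_csSup (BnormSet_bddAbove r A) (BnormSet_nonempty r' A)
    (fun x ⟨ω, h1, h2, h3⟩ => ⟨ω, h1, fun j hj => h2 j (hj.trans h), h3⟩)

lemma natNorm_le_Bnorm (r : ℕ) (A : ℝ →₀ ℝ) : natNorm A ≤ Bnorm r A :=
  ciInf_le ⟨0, by rintro x ⟨s, rfl⟩; exact Bnorm_nonneg s A⟩ r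

lemma natNorm_nonneg (A : ℝ →₀ ℝ) : 0 ≤ natNorm A :=
  le_ciInf fun r => Bnorm_nonneg r A

lemma Bnorm_add (r : ℕ) (A B : ℝ →₀ ℝ) : Bnorm r (A + B) ≤ Bnorm r A + Bnorm r B := by
  refine csSup_le (BnormSet_nonempty r (A + B)) ?_
  rintro x ⟨ω, h1, h2, rfl⟩
  rw [Finsupp.sum_add_index' (fun p : ℝ => zero_mul (ω p)) (fun (p : ℝ) (a b : ℝ) => add_mul a b (ω p))]
  exact add_le_add (le_csSup (BnormSet_bddAbove r A) ⟨ω, h1, h2, rfl⟩)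
    (le_csSup (BnormSet_bddAbove r B) ⟨ω, h1, h2, rfl⟩)

lemma natNorm_add (A B : ℝ →₀ ℝ) : natNorm (A + B) ≤ natNorm A + natNorm B := by
  have key : ∀ r s : ℕ, natNorm (A + B) ≤ Bnorm r A + Bnorm s B := by
    intro r s
    calc natNorm (A + B) ≤ Bnorm (max r s) (A + B) := natNorm_le_Bnorm _ _
      _ ≤ Bnorm (max r s) A + Bnorm (max r s) B := Bnorm_add _ _ _
      _ ≤ Bnorm r A + Bnorm s B :=
          add_le_add (Bnorm_anti (le_max_left r s) A) (Bnorm_anti (le_max_right r s) B)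
  have h1 : ∀ s : ℕ, natNorm (A + B) - Bnorm s B ≤ natNorm A := fun s =>
    le_ciInf fun r => by linarith [key r s]
  have h2 : natNorm (A + B) - natNorm A ≤ natNorm B :=
    le_ciInf fun s => by linarith [h1 s]
  linarith

lemma BnormSet_neg (r : ℕ) (A : ℝ →₀ ℝ) : BnormSet r (-A) ⊆ BnormSet r A := by
  rintro x ⟨ω, h1, h2, rfl⟩
  refine ⟨fun t => -ω t, h1.neg, fun j hj t => ?_, ?_⟩
  · rw [iteratedDeriv_fun_neg, abs_neg]; exact h2 j hj t
  · have : (-A) = (-1 : ℝ) • A := by rw [neg_one_smul]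
    rw [this, Finsupp.sum_smul_index (fun p : ℝ => zero_mul (ω p))]
    apply Finsupp.sum_congr
    intro p _
    ring

lemma BnormSet_neg_eq (r : ℕ) (A : ℝ →₀ ℝ) : BnormSet r (-A) = BnormSet r A :=
  Set.Subset.antisymm (BnormSet_neg r A) (by simpa using BnormSet_neg r (-A))

lemma Bnorm_zero (r : ℕ) : Bnorm r (0 : ℝ →₀ ℝ) = 0 := by
  refine le_antisymm ?_ (Bnorm_nonneg r 0)
  refine csSup_le (BnormSet_nonempty r 0) ?_
  rintro x ⟨ω, h1, h2, rfl⟩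
  simp

lemma BnormSet_smul (r : ℕ) (c : ℝ) (A : ℝ →₀ ℝ) :
    BnormSet r (c • A) = (fun x => c * x) '' BnormSet r A := by
  ext x
  constructor
  · rintro ⟨ω, h1, h2, rfl⟩
    refine ⟨A.sum (fun p a => a * ω p), ⟨ω, h1, h2, rfl⟩, ?_⟩
    rw [Finsupp.sum_smul_index (fun p : ℝ => zero_mul (ω p)), show ((fun x => c * x) (A.sum fun p a => a * ω p)) = c * (A.sum fun p a => a * ω p) from rfl, Finsupp.mul_sum]
    apply Finsupp.sum_congr
    intro p _; ring
  · rintro ⟨y, ⟨ω, h1, h2, rfl⟩, rfl⟩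
    refine ⟨ω, h1, h2, ?_⟩
    rw [Finsupp.sum_smul_index (fun p : ℝ => zero_mul (ω p)), show ((fun x => c * x) (A.sum fun p a => a * ω p)) = c * (A.sum fun p a => a * ω p) from rfl, Finsupp.mul_sum]
    apply Finsupp.sum_congr
    intro p _; ring

lemma Bnorm_smul_nonneg (r : ℕ) {c : ℝ} (hc : 0 < c) (A : ℝ →₀ ℝ) :
    Bnorm r (c • A) = c * Bnorm r A := by
  have hbdd := BnormSet_bddAbove r A
  have hne := BnormSet_nonempty r A
  have hbddi : BddAbove ((fun x => c * x) '' BnormSet r A) := by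
    obtain ⟨b, hb⟩ := hbdd
    exact ⟨c * b, by rintro x ⟨y, hy, rfl⟩; exact mul_le_mul_of_nonneg_left (hb hy) hc.le⟩
  rw [Bnorm, BnormSet_smul]
  refine le_antisymm ?_ ?_
  · refine csSup_le (hne.image _) ?_
    rintro x ⟨y, hy, rfl⟩
    exact mul_le_mul_of_nonneg_left (le_csSup hbdd hy) hc.le
  · rw [← le_div_iff₀' hc]
    refine csSup_le hne fun y hy => ?_
    rw [le_div_iff₀' hc]
    exact le_csSup hbddi ⟨y, hy, rfl⟩

lemma Bnorm_smul (r : ℕ) (c : ℝ) (A : ℝ →₀ ℝ) : Bnorm r (c • A) = |c| * Bnorm r A := by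
  rcases lt_trichotomy c 0 with hc | hc | hc
  · have h1 : c • A = (-c) • (-A) := by rw [smul_neg, neg_smul, neg_neg]
    rw [h1, Bnorm_smul_nonneg r (by linarith) (-A), abs_of_neg hc]
    congr 1
    rw [Bnorm, Bnorm, BnormSet_neg_eq]
  · subst hc; simp [Bnorm_zero]
  · rw [Bnorm_smul_nonneg r hc, abs_of_pos hc]

lemma natNorm_smul (c : ℝ) (A : ℝ →₀ ℝ) : natNorm (c • A) = |c| * natNorm A := by
  unfold natNorm
  rw [Real.mul_iInf_of_nonneg (abs_nonneg c)]
  exact iInf_congr fun r => Bnorm_smul r c A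

open Real in
lemma iteratedDeriv_sin_affine (a b : ℝ) (n : ℕ) :
    iteratedDeriv n (fun t => Real.sin (a * t + b)) =
      fun t => a ^ n * Real.sin (a * t + (b + n * (π / 2))) := by
  induction n with
  | zero => simp
  | succ n ih =>
    rw [iteratedDeriv_succ, ih]
    funext t
    have hinner : HasDerivAt (fun t : ℝ => a * t + (b + n * (π / 2))) (a * 1) t :=
      ((hasDerivAt_id t).const_mul a).add_const _
    have h : HasDerivAt (fun t : ℝ => a ^ n * Real.sin (a * t + (b + n * (π / 2))))
        (a ^ n * (Real.cos (a * t + (b + n * (π / 2))) * (a * 1))) t :=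
      ((Real.hasDerivAt_sin _).comp t hinner).const_mul _
    rw [h.deriv]
    have harg : a * t + (b + (n + 1 : ℕ) * (π / 2)) = (a * t + (b + n * (π / 2))) + π / 2 := by
      push_cast; ring
    rw [harg, Real.sin_add_pi_div_two]
    ring

lemma abs_iteratedDeriv_sin_affine_le {a : ℝ} (ha : 0 ≤ a) (b : ℝ) (n : ℕ) (t : ℝ) :
    |iteratedDeriv n (fun t => Real.sin (a * t + b)) t| ≤ a ^ n := by
  rw [iteratedDeriv_sin_affine, abs_mul, abs_pow, abs_of_nonneg ha]
  exact mul_le_of_le_one_right (pow_nonneg ha n)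
    (abs_le.2 ⟨Real.neg_one_le_sin _, Real.sin_le_one _⟩)

lemma contDiff_sin_affine (a b : ℝ) : ContDiff ℝ (⊤ : ℕ∞) (fun t : ℝ => Real.sin (a * t + b)) :=
  Real.contDiff_sin.comp ((contDiff_const.mul contDiff_id).add contDiff_const)

lemma iteratedDeriv_one_fun (j : ℕ) (hj : j ≠ 0) :
    iteratedDeriv j (fun _ : ℝ => (1:ℝ)) = fun _ => 0 := by
  induction j with
  | zero => exact absurd rfl hj
  | succ n ih =>
    rcases Nat.eq_zero_or_pos n with hn | hn
    · subst hn; rw [iteratedDeriv_succ, iteratedDeriv_zero]; simp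
    · rw [iteratedDeriv_succ, ih (Nat.pos_iff_ne_zero.1 hn)]; simp

lemma prod_sin_deriv_bound {a : ℝ} (ha : 0 ≤ a) (S : Finset ℝ) (n : ℕ) (t : ℝ) :
    |iteratedDeriv n (fun t => ∏ q ∈ S, Real.sin (a * t + -(a * q))) t| ≤
      ((S.card : ℝ) * a) ^ n := by
  induction S using Finset.cons_induction generalizing n t with
  | empty =>
    simp only [Finset.prod_empty, Finset.card_empty, Nat.cast_zero, zero_mul]
    rcases Nat.eq_zero_or_pos n with hn | hn
    · subst hn; simp
    · rw [iteratedDeriv_one_fun n (Nat.pos_iff_ne_zero.1 hn), zero_pow (Nat.pos_iff_ne_zero.1 hn)]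
      simp
  | cons q S hq ih =>
    have hfun : (fun t => ∏ q' ∈ Finset.cons q S hq, Real.sin (a * t + -(a * q'))) =
        fun t => Real.sin (a * t + -(a * q)) * ∏ q' ∈ S, Real.sin (a * t + -(a * q')) := by
      funext t; rw [Finset.prod_cons]
    rw [hfun]
    have hf : ContDiff ℝ (⊤ : ℕ∞) (fun t : ℝ => Real.sin (a * t + -(a * q))) := contDiff_sin_affine _ _
    have hg : ContDiff ℝ (⊤ : ℕ∞) (fun t : ℝ => ∏ q' ∈ S, Real.sin (a * t + -(a * q'))) :=
      contDiff_prod fun i _ => contDiff_sin_affine a (-(a * i))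
    have key := norm_iteratedFDeriv_mul_le (𝕜 := ℝ) hf hg t (n := n) (by exact_mod_cast (le_top : (n : ℕ∞) ≤ ⊤))
    rw [← Real.norm_eq_abs, ← norm_iteratedFDeriv_eq_norm_iteratedDeriv]
    refine key.trans ?_
    have hsum : ∀ i ∈ Finset.range (n + 1),
        (n.choose i : ℝ) * ‖iteratedFDeriv ℝ i (fun t : ℝ => Real.sin (a * t + -(a * q))) t‖ *
          ‖iteratedFDeriv ℝ (n - i) (fun t : ℝ => ∏ q' ∈ S, Real.sin (a * t + -(a * q'))) t‖ ≤
        (n.choose i : ℝ) * a ^ i * ((S.card : ℝ) * a) ^ (n - i) := by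
      intro i _
      have h1 : ‖iteratedFDeriv ℝ i (fun t : ℝ => Real.sin (a * t + -(a * q))) t‖ ≤ a ^ i := by
        rw [norm_iteratedFDeriv_eq_norm_iteratedDeriv, Real.norm_eq_abs]
        exact abs_iteratedDeriv_sin_affine_le ha _ i t
      have h2 : ‖iteratedFDeriv ℝ (n - i)
          (fun t : ℝ => ∏ q' ∈ S, Real.sin (a * t + -(a * q'))) t‖ ≤
          ((S.card : ℝ) * a) ^ (n - i) := by
        rw [norm_iteratedFDeriv_eq_norm_iteratedDeriv, Real.norm_eq_abs]
        exact ih (n - i) t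
      have hc : (0:ℝ) ≤ (n.choose i : ℝ) := Nat.cast_nonneg _
      calc (n.choose i : ℝ) * ‖iteratedFDeriv ℝ i _ t‖ * ‖iteratedFDeriv ℝ (n - i) _ t‖
          ≤ (n.choose i : ℝ) * a ^ i * ‖iteratedFDeriv ℝ (n - i) _ t‖ := by
            apply mul_le_mul_of_nonneg_right _ (norm_nonneg _)
            exact mul_le_mul_of_nonneg_left h1 hc
        _ ≤ (n.choose i : ℝ) * a ^ i * ((S.card : ℝ) * a) ^ (n - i) := by
            apply mul_le_mul_of_nonneg_left h2
            exact mul_nonneg hc (pow_nonneg ha i)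
    refine (Finset.sum_le_sum hsum).trans ?_
    have hpow : (((Finset.cons q S hq).card : ℝ) * a) ^ n =
        ∑ i ∈ Finset.range (n + 1), (n.choose i : ℝ) * a ^ i * ((S.card : ℝ) * a) ^ (n - i) := by
      rw [Finset.card_cons]
      have : ((S.card + 1 : ℕ) : ℝ) * a = a + (S.card : ℝ) * a := by push_cast; ring
      rw [this, add_pow]
      refine Finset.sum_congr rfl fun i _ => by ring
    rw [hpow]

lemma sin_ne_zero_of_abs_lt_pi {x : ℝ} (h0 : x ≠ 0) (h : |x| < Real.pi) : Real.sin x ≠ 0 := by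
  rw [abs_lt] at h
  rcases lt_or_gt_of_ne h0 with hx | hx
  · exact (Real.sin_neg_of_neg_of_neg_pi_lt hx h.1).ne
  · exact (Real.sin_pos_of_pos_of_lt_pi hx h.2).ne'

lemma natNorm_eq_zero {A : ℝ →₀ ℝ} (h : natNorm A = 0) : A = 0 := by
  by_contra hA
  obtain ⟨p, hp⟩ := Finsupp.support_nonempty_iff.2 hA
  set S : Finset ℝ := A.support.erase p with hS
  set M : ℕ := S.sup fun q => ⌈|p - q|⌉₊ with hM
  set D : ℝ := (S.card : ℝ) + M + 1 with hD
  have hD1 : (1:ℝ) ≤ D := by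
    have h1 : (0:ℝ) ≤ (S.card:ℝ) := Nat.cast_nonneg _
    have h2 : (0:ℝ) ≤ (M:ℝ) := Nat.cast_nonneg _
    rw [hD]; linarith
  have hDpos : (0:ℝ) < D := lt_of_lt_of_le one_pos hD1
  set a : ℝ := 1 / D with ha
  have hapos : 0 < a := by positivity
  have hcard : (S.card : ℝ) * a ≤ 1 := by
    rw [ha, mul_one_div, div_le_one hDpos, hD]
    have : (0:ℝ) ≤ (M:ℝ) := Nat.cast_nonneg _
    linarith
  have habs : ∀ q ∈ S, a * |p - q| < Real.pi := by
    intro q hq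
    have h1 : |p - q| ≤ (M : ℝ) := by
      refine (Nat.le_ceil _).trans ?_
      exact_mod_cast Nat.cast_le.2 (Finset.le_sup (f := fun q => ⌈|p - q|⌉₊) hq)
    have h2 : a * |p - q| ≤ (M:ℝ) / D := by
      rw [ha, one_div, inv_mul_eq_div, div_le_div_iff_of_pos_right hDpos] at *
      exact h1
    have h3 : (M:ℝ) / D < 1 := by
      rw [div_lt_one hDpos, hD]
      have : (0:ℝ) ≤ (S.card:ℝ) := Nat.cast_nonneg _
      linarith
    linarith [Real.pi_gt_three]
  set ω : ℝ → ℝ := fun t => ∏ q ∈ S, Real.sin (a * t + -(a * q)) with hω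
  have hωcd : ContDiff ℝ (⊤ : ℕ∞) ω := contDiff_prod fun i _ => contDiff_sin_affine a (-(a * i))
  have hωbd : ∀ j : ℕ, ∀ t : ℝ, |iteratedDeriv j ω t| ≤ 1 := by
    intro j t
    refine (prod_sin_deriv_bound hapos.le S j t).trans ?_
    exact pow_le_one₀ (mul_nonneg (Nat.cast_nonneg _) hapos.le) hcard
  have hωq : ∀ q ∈ S, ω q = 0 := by
    intro q hq
    refine Finset.prod_eq_zero hq ?_
    rw [show a * q + -(a * q) = 0 by ring, Real.sin_zero]
  have hωp : ω p ≠ 0 := by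
    rw [hω]
    refine Finset.prod_ne_zero_iff.2 fun q hq => ?_
    refine sin_ne_zero_of_abs_lt_pi ?_ ?_
    · rw [show a * p + -(a * q) = a * (p - q) by ring]
      exact mul_ne_zero hapos.ne' (sub_ne_zero.2 fun hh => (Finset.mem_erase.1 hq).1 (by linarith))
    · rw [show a * p + -(a * q) = a * (p - q) by ring, abs_mul, abs_of_pos hapos]
      exact habs q hq
  set x₀ : ℝ := A.sum (fun q b => b * ω q) with hx₀
  have hx₀val : x₀ = A p * ω p := by
    rw [hx₀, Finsupp.sum]
    refine Finset.sum_eq_single_of_mem p hp fun q hq hqp => ?_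
    rw [hωq q (Finset.mem_erase.2 ⟨hqp, hq⟩), mul_zero]
  have hx₀ne : x₀ ≠ 0 := hx₀val ▸ mul_ne_zero (Finsupp.mem_support_iff.1 hp) hωp
  have hmem : ∀ r : ℕ, x₀ ∈ BnormSet r A := fun r => ⟨ω, hωcd, fun j _ t => hωbd j t, rfl⟩
  have hmemneg : ∀ r : ℕ, -x₀ ∈ BnormSet r A := by
    intro r
    refine ⟨fun t => -ω t, hωcd.neg, fun j _ t => by rw [iteratedDeriv_fun_neg, abs_neg]; exact hωbd j t, ?_⟩
    rw [hx₀, Finsupp.sum, Finsupp.sum, ← Finset.sum_neg_distrib]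
    exact Finset.sum_congr rfl fun q _ => by ring
  have hlow : ∀ r : ℕ, |x₀| ≤ Bnorm r A := by
    intro r
    refine abs_le.2 ⟨?_, le_csSup (BnormSet_bddAbove r A) (hmem r)⟩
    have h2 : -x₀ ≤ Bnorm r A := le_csSup (BnormSet_bddAbove r A) (hmemneg r)
    linarith
  have : |x₀| ≤ natNorm A := le_ciInf hlow
  rw [h] at this
  exact hx₀ne (abs_eq_zero.1 (le_antisymm this (abs_nonneg _)))

noncomputable def natSeminorm : Seminorm ℝ (ℝ →₀ ℝ) :=
  Seminorm.of natNorm natNorm_add (fun c A => by rw [natNorm_smul, Real.norm_eq_abs])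


/-- A topology `τ` on pointed 0-chains is *admissible* when it is a locally convex vector
topology making each inclusion from `(P, ‖·‖_{B^r})` continuous (every `τ`-neighborhood of `0`
contains some `B^r`-ball). The locally convex inductive limit topology is the finest
admissible topology. -/
def Admissible (τ : TopologicalSpace (ℝ →₀ ℝ)) : Prop :=
  @IsTopologicalAddGroup (ℝ →₀ ℝ) τ _ ∧ @ContinuousSMul ℝ (ℝ →₀ ℝ) _ _ τ ∧
  @LocallyConvexSpace ℝ (ℝ →₀ ℝ) _ _ _ _ τ ∧
  ∀ r : ℕ, ∀ U ∈ @nhds (ℝ →₀ ℝ) τ 0, ∃ ε : ℝ, 0 < ε ∧ {A | Bnorm r A < ε} ⊆ U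

/-- the `♮`-norm `‖A‖_♮ = inf_r ‖A‖_{B^r}` is a norm on pointed 0-chains, and
the topology it induces is coarser than the locally convex inductive limit topology `τ` of the
spaces `(P, ‖·‖_{B^r})`: every `♮`-ball around `0` is a `τ`-neighborhood of `0`. -/
theorem natNorm_is_norm_and_coarser :
    (∀ A B : ℝ →₀ ℝ, natNorm (A + B) ≤ natNorm A + natNorm B) ∧
    (∀ (c : ℝ) (A : ℝ →₀ ℝ), natNorm (c • A) = |c| * natNorm A) ∧
    (∀ A : ℝ →₀ ℝ, natNorm A = 0 → A = 0) ∧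
    (∀ τ : TopologicalSpace (ℝ →₀ ℝ), Admissible τ →
      (∀ τ' : TopologicalSpace (ℝ →₀ ℝ), Admissible τ' → τ ≤ τ') →
      ∀ ε : ℝ, 0 < ε → {A : ℝ →₀ ℝ | natNorm A < ε} ∈ @nhds (ℝ →₀ ℝ) τ 0) := by
  refine ⟨natNorm_add, natNorm_smul, fun A h => natNorm_eq_zero h, ?_⟩
  intro τ hτ hmin ε hε
  set p : SeminormFamily ℝ (ℝ →₀ ℝ) (Fin 1) := fun _ => natSeminorm with hp
  letI τ₀ : TopologicalSpace (ℝ →₀ ℝ) := p.moduleFilterBasis.topology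
  have hws : WithSeminorms p := ⟨rfl⟩
  have hadd : @IsTopologicalAddGroup (ℝ →₀ ℝ) τ₀ _ := hws.topologicalAddGroup
  have hsmul : @ContinuousSMul ℝ (ℝ →₀ ℝ) _ _ τ₀ := p.moduleFilterBasis.continuousSMul
  have hlc : @LocallyConvexSpace ℝ (ℝ →₀ ℝ) _ _ _ _ τ₀ := hws.toLocallyConvexSpace
  have hadm : Admissible τ₀ := by
    refine ⟨hadd, hsmul, hlc, ?_⟩
    intro r U hU
    rw [hws.mem_nhds_iff] at hU
    obtain ⟨s, δ, hδ, hsub⟩ := hU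
    refine ⟨δ, hδ, fun A hA => hsub ?_⟩
    rw [Seminorm.mem_ball_zero]
    have h1 : (s.sup p) A ≤ natSeminorm A :=
      Seminorm.finset_sup_apply_le (natNorm_nonneg A) fun i _ => le_refl _
    have h2 : natSeminorm A ≤ Bnorm r A := natNorm_le_Bnorm r A
    exact lt_of_le_of_lt (h1.trans h2) hA
  have hle : τ ≤ τ₀ := hmin τ₀ hadm
  have hball : {A : ℝ →₀ ℝ | natNorm A < ε} ∈ @nhds (ℝ →₀ ℝ) τ₀ 0 := by
    rw [hws.mem_nhds_iff]
    refine ⟨{0}, ε, hε, ?_⟩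
    intro A hA
    rw [Seminorm.mem_ball_zero, Finset.sup_singleton] at hA
    exact hA
  exact nhds_mono hle hball
end
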